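/- For every g ≥ 1, every 1-backbone shape of genus g has at most 4g boundary components, i.e. r ≤ 4g. -/

import Mathlib

namespace RNA

noncomputable section

/-- The forward orbit of `x` under iteration of `f`. -/
def orbitOf (f : ℕ → ℕ) (x : ℕ) : Set ℕ := {y | ∃ j : ℕ, f^[j] x = y}

/-- The number of cycles (orbits) of `f` among the points `< k`. -/
def numCyclesOn (f : ℕ → ℕ) (k : ℕ) : ℕ :=
  Set.ncard {S : Set ℕ | ∃ x, x < k ∧ S = orbitOf f x}

/-- The number of cycles of length at least `3` among the points `< k` (multiloops). -/
def numMultiOn (f : ℕ → ℕ) (k : ℕ) : ℕ :=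
  Set.ncard {S : Set ℕ | (∃ x, x < k ∧ S = orbitOf f x) ∧ 3 ≤ S.ncard}

/-- The cyclic permutation `(0 1 ⋯ k-1)`, as a function on `ℕ` fixing everything `≥ k`. -/
def gammaOne (k : ℕ) : ℕ → ℕ := fun i => if i + 1 = k then 0 else if i < k then i + 1 else i

/-- The permutation with the two cycles `(0 ⋯ m-1)` and `(m ⋯ k-1)`. -/
def gammaTwo (m k : ℕ) : ℕ → ℕ := fun i =>
  if i + 1 = m then 0 else if i + 1 = k then m else if i < k then i + 1 else i

/-- A planted 1-backbone diagram with `n` arcs: an involution on the vertices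
`0, 1, …, 2n-1` (shifting the paper's labels `1, …, 2n` by one). -/
structure OneD where
  n : ℕ
  f : ℕ → ℕ

namespace OneD

/-- Well-formedness: `n ≥ 1`, `f` is a fixed-point-free involution of `{0, …, 2n-1}`
(extended by the identity elsewhere) pairing `0` with `2n-1` (the rainbow). -/
def WF (D : OneD) : Prop :=
  1 ≤ D.n ∧ (∀ i, i < 2 * D.n → D.f i < 2 * D.n) ∧
    (∀ i, 2 * D.n ≤ i → D.f i = i) ∧ (∀ i, D.f (D.f i) = i) ∧
    (∀ i, i < 2 * D.n → D.f i ≠ i) ∧ D.f 0 = 2 * D.n - 1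

/-- `{i,j}` is an arc. -/
def arc (D : OneD) (i j : ℕ) : Prop := i < 2 * D.n ∧ D.f i = j

/-- A shape: no 1-arc other than possibly the rainbow, and no stack
(no pair of arcs `{i,j}`, `{i+1,j-1}` with `i+1 < j-1`). -/
def IsShape (D : OneD) : Prop :=
  (∀ i, D.arc i (i + 1) → i = 0 ∧ i + 1 = 2 * D.n - 1) ∧
  (∀ i j, D.arc i j → D.arc (i + 1) (j - 1) → ¬ (i + 1 < j - 1))

/-- The boundary permutation `α ∘ γ`. -/
def bd (D : OneD) : ℕ → ℕ := D.f ∘ gammaOne (2 * D.n)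

/-- The number `r` of boundary components. -/
def r (D : OneD) : ℕ := numCyclesOn D.bd (2 * D.n)

/-- The number of multiloops: boundary components of length at least 3. -/
def nMulti (D : OneD) : ℕ := numMultiOn D.bd (2 * D.n)

/-- The genus `g`, defined by `2 - 2g - r = 1 - n`. -/
def HasGenus (D : OneD) (g : ℕ) : Prop := 2 * g + D.r = D.n + 1

/-- A-shape: the vertex following the partner of vertex `1` (paper's vertex `2`)
is paired with vertex `2n-2` (paper's vertex `2n-1`); only for `n ≥ 2`. -/
def IsA (D : OneD) : Prop := 2 ≤ D.n ∧ D.f (D.f 1 + 1) = 2 * D.n - 2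

/-- B-shape: a shape with `n ≥ 2` arcs which is not an A-shape. -/
def IsB (D : OneD) : Prop := 2 ≤ D.n ∧ D.f (D.f 1 + 1) ≠ 2 * D.n - 2

end OneD

/-- The set of 1-backbone shapes of genus `g`. -/
def oneShapeSet (g : ℕ) : Set OneD := {D | D.WF ∧ D.IsShape ∧ D.HasGenus g}

/-- The set of 1-backbone shapes of genus `g` with `n` arcs. -/
def oneShapeSetN (g n : ℕ) : Set OneD := {D | D ∈ oneShapeSet g ∧ D.n = n}

/-- The set of A-shapes of genus `g`. -/
def ASet (g : ℕ) : Set OneD := {D | D ∈ oneShapeSet g ∧ D.IsA}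

/-- The set `𝒜_g(n)` of A-shapes of genus `g` with `n` arcs. -/
def ASetN (g n : ℕ) : Set OneD := {D | D ∈ oneShapeSetN g n ∧ D.IsA}

/-- The set `ℬ_g(n)` of B-shapes of genus `g` with `n` arcs. -/
def BSetN (g n : ℕ) : Set OneD := {D | D ∈ oneShapeSetN g n ∧ D.IsB}

/-- `s_g(n)`: the number of 1-backbone shapes of genus `g` with `n` arcs. -/
def sCount (g n : ℕ) : ℕ := (oneShapeSetN g n).ncard

/-- `a_g(n)`: the number of A-shapes of genus `g` with `n` arcs. -/
def aCount (g n : ℕ) : ℕ := (ASetN g n).ncard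

/-- A 2-backbone diagram with `n` arcs and cut point `m`: an involution on the
vertices `0, …, 2n-1`, with backbones `{0, …, m-1}` and `{m, …, 2n-1}`. -/
structure TwoD where
  n : ℕ
  m : ℕ
  f : ℕ → ℕ

namespace TwoD

/-- Well-formedness of a 2-backbone matching: two nonempty backbones and `f` a
fixed-point-free involution of `{0, …, 2n-1}` (extended by the identity). -/
def WF (D : TwoD) : Prop :=
  1 ≤ D.m ∧ D.m < 2 * D.n ∧ (∀ i, i < 2 * D.n → D.f i < 2 * D.n) ∧
    (∀ i, 2 * D.n ≤ i → D.f i = i) ∧ (∀ i, D.f (D.f i) = i) ∧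
    (∀ i, i < 2 * D.n → D.f i ≠ i)

/-- `{i,j}` is an arc. -/
def arc (D : TwoD) (i j : ℕ) : Prop := i < 2 * D.n ∧ D.f i = j

/-- `i` and `j` lie in the same backbone. -/
def sameBB (D : TwoD) (i j : ℕ) : Prop := (i < D.m ∧ j < D.m) ∨ (D.m ≤ i ∧ D.m ≤ j)

/-- Connectivity: some arc has one endpoint in each backbone. -/
def Connected (D : TwoD) : Prop := ∃ i j, D.arc i j ∧ i < D.m ∧ D.m ≤ j

/-- A 2-backbone shape: both rainbows `{0, m-1}` and `{m, 2n-1}` are present,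
there is no 1-arc (an arc `{i,i+1}` within one backbone) other than possibly the
rainbows, and no stack. -/
def IsShape (D : TwoD) : Prop :=
  2 ≤ D.m ∧ D.m + 2 ≤ 2 * D.n ∧ D.f 0 = D.m - 1 ∧ D.f D.m = 2 * D.n - 1 ∧
  (∀ i, D.arc i (i + 1) → D.sameBB i (i + 1) →
      (i = 0 ∧ i + 1 = D.m - 1) ∨ (i = D.m ∧ i + 1 = 2 * D.n - 1)) ∧
  (∀ i j, D.arc i j → D.arc (i + 1) (j - 1) → D.sameBB i (i + 1) →
      D.sameBB (j - 1) j → ¬ (i + 1 < j - 1))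

/-- The boundary permutation `α ∘ γ`. -/
def bd (D : TwoD) : ℕ → ℕ := D.f ∘ gammaTwo D.m (2 * D.n)

/-- The number `r` of boundary components. -/
def r (D : TwoD) : ℕ := numCyclesOn D.bd (2 * D.n)

/-- The number of multiloops: boundary components of length at least 3. -/
def nMulti (D : TwoD) : ℕ := numMultiOn D.bd (2 * D.n)

/-- The genus `g`, defined by `2 - 2g - r = 2 - n`. -/
def HasGenus (D : TwoD) (g : ℕ) : Prop := 2 * g + D.r = D.n

end TwoD

/-- The set `𝒬_g(n)` of connected 2-backbone shapes of genus `g` with `n` arcs. -/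
def twoShapeSetN (g n : ℕ) : Set TwoD :=
  {D | D.WF ∧ D.IsShape ∧ D.Connected ∧ D.HasGenus g ∧ D.n = n}

/-- `q_g(n)`: the number of connected 2-backbone shapes of genus `g` with `n` arcs. -/
def qCount (g n : ℕ) : ℕ := (twoShapeSetN g n).ncard

/-- The gluing map `η`: concatenate the two backbones (the two old rainbows become
ordinary arcs) and add a new rainbow over the resulting single backbone. -/
def glue (D : TwoD) : OneD :=
  ⟨D.n + 1, fun i =>
    if i = 0 then 2 * D.n + 1
    else if i = 2 * D.n + 1 then 0
    else if i ≤ 2 * D.n then D.f (i - 1) + 1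
    else i⟩

/-- Place an ordered pair of 1-backbone diagrams on two backbones,
each keeping its own rainbow. -/
def combine (S T : OneD) : TwoD :=
  ⟨S.n + T.n, 2 * S.n, fun i =>
    if i < 2 * S.n then S.f i
    else if i < 2 * (S.n + T.n) then T.f (i - 2 * S.n) + 2 * S.n
    else i⟩

/-- The set `𝒬'_g(N)`: the disjoint union of the set of connected 2-backbone shapes
of genus `g` with `N` arcs and the set of ordered pairs of 1-backbone shapes whose
genera are positive and sum to `g+1` and whose arc numbers sum to `N`. -/
def QprimeSetN (g N : ℕ) : Set (TwoD ⊕ OneD × OneD) :=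
  {x | Sum.elim
        (fun D : TwoD => D.WF ∧ D.IsShape ∧ D.Connected ∧ D.HasGenus g ∧ D.n = N)
        (fun p : OneD × OneD =>
          p.1.WF ∧ p.1.IsShape ∧ p.2.WF ∧ p.2.IsShape ∧
          (∃ g₁ g₂, 1 ≤ g₁ ∧ 1 ≤ g₂ ∧ g₁ + g₂ = g + 1 ∧
            p.1.HasGenus g₁ ∧ p.2.HasGenus g₂) ∧
          p.1.n + p.2.n = N) x}

/-- The gluing map `η` on `𝒬'`: glue a connected 2-backbone shape directly, and glue
a pair of 1-backbone shapes after placing them on two backbones. -/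
def etaMap : TwoD ⊕ OneD × OneD → OneD := Sum.elim glue fun p => glue (combine p.1 p.2)

/-- The 2-backbone diagram underlying an element of `𝒬'`. -/
def underlyingTwoD : TwoD ⊕ OneD × OneD → TwoD := Sum.elim id fun p => combine p.1 p.2

/-- Old label of the new vertex `k` after deleting the two points `a < b`. -/
def insTwo (a b k : ℕ) : ℕ := if k < a then k else if k + 1 < b then k + 1 else k + 2

/-- New label of the old vertex `j` after deleting the two points `a < b`. -/
def delTwo (a b j : ℕ) : ℕ := j - (if a < j then 1 else 0) - (if b < j then 1 else 0)

/-- The involution obtained from `f` by deleting the two paired points `a < b`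
and relabeling. -/
def deleteTwo (f : ℕ → ℕ) (a b : ℕ) : ℕ → ℕ := fun k => delTwo a b (f (insTwo a b k))

/-- The map `θ`: remove from an A-shape the arc joining the vertex following the
partner of vertex `1` (paper's vertex `2`) to the vertex `2n-2` (paper's `2n-1`),
deleting its two endpoints and relabeling. -/
def theta (D : OneD) : OneD := ⟨D.n - 1, deleteTwo D.f (D.f 1 + 1) (2 * D.n - 2)⟩

/-- The new cut point after deleting the points `a` and `b`. -/
def mshift (m a b : ℕ) : ℕ := m - (if a < m then 1 else 0) - (if b < m then 1 else 0)

/-- One reduction step: delete a 1-arc (an arc `{i,i+1}` within one backbone), or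
collapse a stack `{i,j}`, `{i+1,j-1}` by deleting the inner arc `{i+1,j-1}`. -/
def Step (M M' : TwoD) : Prop :=
  (∃ i, M.arc i (i + 1) ∧ M.sameBB i (i + 1) ∧
      M' = ⟨M.n - 1, mshift M.m i (i + 1), deleteTwo M.f i (i + 1)⟩) ∨
  (∃ i j, M.arc i j ∧ M.arc (i + 1) (j - 1) ∧ i + 1 < j - 1 ∧ M.sameBB i (i + 1) ∧
      M.sameBB (j - 1) j ∧
      M' = ⟨M.n - 1, mshift M.m (i + 1) (j - 1), deleteTwo M.f (i + 1) (j - 1)⟩)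

/-- A pure preshape: no 1-arc and no stack remain. -/
def Reduced (P : TwoD) : Prop :=
  (∀ i, ¬ (P.arc i (i + 1) ∧ P.sameBB i (i + 1))) ∧
  (∀ i j, P.arc i j → P.arc (i + 1) (j - 1) → P.sameBB i (i + 1) →
      P.sameBB (j - 1) j → ¬ (i + 1 < j - 1))

/-- Relabeling of an old vertex of a preshape after planting rainbows. -/
def newlab (m o : ℕ) : ℕ := if o < m then o + 1 else o + 3

/-- Plant a rainbow over each backbone of a pure preshape. -/
def plant (P : TwoD) : TwoD :=
  ⟨P.n + 2, P.m + 2, fun k =>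
    if k = 0 then P.m + 1
    else if k = P.m + 1 then 0
    else if k = P.m + 2 then 2 * P.n + 3
    else if k = 2 * P.n + 3 then P.m + 2
    else if k ≤ P.m then newlab P.m (P.f (k - 1))
    else if k ≤ 2 * P.n + 2 then newlab P.m (P.f (k - 3))
    else k⟩

/-- `s` is the shape of the 2-backbone matching `M`: iteratively collapse stacks and
delete 1-arcs until none remains, then add a rainbow over each backbone. -/
def ShapeOf (M s : TwoD) : Prop :=
  ∃ P : TwoD, Relation.ReflTransGen Step M P ∧ Reduced P ∧ s = plant P

/-- `q_s(n)`: the number of 2-backbone matchings with `n` arcs whose shape is `s`. -/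
def fiberCount (s : TwoD) (n : ℕ) : ℕ :=
  Set.ncard {M : TwoD | M.WF ∧ M.n = n ∧ ShapeOf M s}

/-- `w_g(n)`: the number of connected 2-backbone matchings with `n` arcs and genus `g`. -/
def wCount (g n : ℕ) : ℕ :=
  Set.ncard {M : TwoD | M.WF ∧ M.Connected ∧ M.HasGenus g ∧ M.n = n}

/-- `W_g(z) = Σ_n w_g(n) zⁿ`, as a formal power series. -/
def Wseries (g : ℕ) : PowerSeries ℤ := PowerSeries.mk fun n => (wCount g n : ℤ)

/-- The Catalan generating function `C₀(z) = Σ_n Catalan(n) zⁿ`. -/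
def catGF : PowerSeries ℤ := PowerSeries.mk fun n => (catalan n : ℤ)

/-- `q̃_g(l)`: the number of connected 2-backbone shapes of genus `g` having `l` arcs
besides their two rainbows. -/
def qlCount (g l : ℕ) : ℕ := qCount g (l + 2)

end


/-!
The last vertex `2n - 1` is a fixed point of `α ∘ γ`: the rainbow closes a boundary component
of length one. Every other boundary component has length at least three, since a fixed point
of `α ∘ γ` there would be a 1-arc and a 2-cycle a stack. Hence `3 (r - 1) ≤ 2n - 1`, and
substituting `n = 2g + r - 1` gives `r ≤ 4g`.
-/

open Function Set

section Orbits

variable {f : ℕ → ℕ} {k x : ℕ}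

theorem numCyclesOn_eq_card_image (f : ℕ → ℕ) (k : ℕ) :
    numCyclesOn f k = ((Finset.range k).image (orbitOf f)).card := by
  rw [numCyclesOn, ← Set.ncard_coe_finset]
  congr 1
  ext S
  simp [eq_comm]

theorem mem_orbitOf_self (f : ℕ → ℕ) (x : ℕ) : x ∈ orbitOf f x := ⟨0, rfl⟩

theorem orbitOf_eq_singleton (h : f x = x) : orbitOf f x = {x} := by
  ext y
  refine ⟨fun ⟨j, hj⟩ => hj ▸ iterate_fixed h j, fun hy => hy ▸ mem_orbitOf_self f x⟩

theorem numCyclesOn_succ_of_apply_eq_self (h : f k = k) :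
    numCyclesOn f (k + 1) = numCyclesOn f k + 1 := by
  classical
  have hnew : orbitOf f k ∉ (Finset.range k).image (orbitOf f) := by
    rw [orbitOf_eq_singleton h, Finset.mem_image]
    rintro ⟨y, hy, hyk⟩
    exact (Finset.mem_range.mp hy).ne (by simpa [hyk] using mem_orbitOf_self f y)
  rw [numCyclesOn_eq_card_image, numCyclesOn_eq_card_image, Finset.range_add_one,
    Finset.image_insert, Finset.card_insert_of_notMem hnew]

theorem mapsTo_Iio_of_apply_eq_self (hf : Injective f)
    (hk : MapsTo f (Iio (k + 1)) (Iio (k + 1))) (h : f k = k) : MapsTo f (Iio k) (Iio k) := by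
  intro y hy
  have hlt : f y < k + 1 := hk (Nat.lt_succ_of_lt hy)
  have hne : f y ≠ k := fun hyk => (Nat.ne_of_lt hy) (hf (hyk.trans h.symm))
  exact Nat.lt_of_le_of_ne (Nat.le_of_lt_succ hlt) hne

theorem mem_periodicPts_of_mapsTo_Iio (hf : Injective f) (hk : MapsTo f (Iio k) (Iio k))
    (hx : x < k) : x ∈ periodicPts f := by
  obtain ⟨p, hp, hper⟩ := (hk.restrict_inj.mpr hf.injOn).mem_periodicPts ⟨x, hx⟩
  have hval := congrArg Subtype.val hper
  exact ⟨p, hp, show f^[p] x = x by simpa [hk.coe_iterate_restrict] using hval⟩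

theorem orbitOf_iterate_of_mem_periodicPts (hx : x ∈ periodicPts f) (j : ℕ) :
    orbitOf f (f^[j] x) = orbitOf f x := by
  obtain ⟨p, hp, hper⟩ := hx
  refine Subset.antisymm (fun _ ⟨i, hi⟩ => ⟨i + j, by rw [iterate_add_apply, hi]⟩) ?_
  rintro _ ⟨i, rfl⟩
  refine ⟨i + (p * j - j), ?_⟩
  rw [← iterate_add_apply, Nat.add_assoc, Nat.sub_add_cancel (Nat.le_mul_of_pos_left j hp),
    iterate_add_apply, iterate_mul, iterate_fixed hper]

theorem three_mul_numCyclesOn_le (hf : Injective f) (hk : MapsTo f (Iio k) (Iio k))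
    (h₁ : ∀ x < k, f x ≠ x) (h₂ : ∀ x < k, f (f x) ≠ x) : 3 * numCyclesOn f k ≤ k := by
  classical
  rw [numCyclesOn_eq_card_image]
  refine (Finset.mul_card_image_le_card _ 3 ?_).trans_eq (Finset.card_range k)
  intro S hS
  obtain ⟨x, hx, rfl⟩ := Finset.mem_image.mp hS
  have hx : x < k := Finset.mem_range.mp hx
  have hper := mem_periodicPts_of_mapsTo_Iio hf hk hx
  have hfx : f x < k := hk hx
  have hsub : ({x, f x, f (f x)} : Finset ℕ) ⊆
      {y ∈ Finset.range k | orbitOf f y = orbitOf f x} := by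
    intro y hy
    simp only [Finset.mem_insert, Finset.mem_singleton] at hy
    simp only [Finset.mem_filter, Finset.mem_range]
    rcases hy with rfl | rfl | rfl
    · exact ⟨hx, rfl⟩
    · exact ⟨hfx, orbitOf_iterate_of_mem_periodicPts hper 1⟩
    · exact ⟨hk hfx, orbitOf_iterate_of_mem_periodicPts hper 2⟩
  have hcard : ({x, f x, f (f x)} : Finset ℕ).card = 3 := by
    rw [Finset.card_insert_of_notMem, Finset.card_pair (h₁ _ hfx).symm]
    simp only [Finset.mem_insert, Finset.mem_singleton, not_or]
    exact ⟨(h₁ x hx).symm, (h₂ x hx).symm⟩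
  exact hcard ▸ Finset.card_le_card hsub

end Orbits

theorem gammaOne_injective (k : ℕ) : Injective (gammaOne k) := by
  intro a b h
  unfold gammaOne at h
  split_ifs at h <;> omega

theorem gammaOne_mapsTo (k : ℕ) : MapsTo (gammaOne k) (Iio k) (Iio k) := by
  intro i hi
  simp only [mem_Iio, gammaOne] at hi ⊢
  split_ifs <;> omega

theorem gammaOne_of_succ_lt {k i : ℕ} (hi : i + 1 < k) : gammaOne k i = i + 1 := by
  unfold gammaOne
  split_ifs <;> omega

namespace OneD

variable {D : OneD}

theorem WF.involutive (hD : D.WF) : Involutive D.f :=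
  hD.2.2.2.1

theorem WF.injective_bd (hD : D.WF) : Injective D.bd :=
  hD.involutive.injective.comp (gammaOne_injective _)

theorem WF.mapsTo_bd (hD : D.WF) : MapsTo D.bd (Iio (2 * D.n)) (Iio (2 * D.n)) :=
  (show MapsTo D.f _ _ from fun _ hi => hD.2.1 _ hi).comp (gammaOne_mapsTo _)

theorem WF.bd_last (hD : D.WF) : D.bd (2 * D.n - 1) = 2 * D.n - 1 := by
  have h : 2 * D.n - 1 + 1 = 2 * D.n := by have := hD.1; omega
  simp [bd, gammaOne, h, hD.2.2.2.2.2]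

theorem bd_of_lt {i : ℕ} (hi : i < 2 * D.n - 1) : D.bd i = D.f (i + 1) :=
  congrArg D.f (gammaOne_of_succ_lt (by omega))

/-- Away from the rainbow, a fixed point of `α ∘ γ` is a 1-arc. -/
theorem IsShape.bd_ne_self (hS : D.IsShape) (hD : D.WF) (hn : 2 ≤ D.n) {x : ℕ}
    (hx : x < 2 * D.n - 1) : D.bd x ≠ x := by
  intro h
  rw [bd_of_lt hx] at h
  have := hS.1 x ⟨by omega, (hD.involutive.eq_iff.1 h).symm⟩
  omega

/-- Away from the rainbow, a 2-cycle `x ↦ y ↦ x` of `α ∘ γ` is a stack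
`{x, y + 1}, {x + 1, y}` (or `{y, x + 1}, {y + 1, x}`). -/
theorem IsShape.bd_bd_ne_self (hS : D.IsShape) (hD : D.WF) (hn : 2 ≤ D.n) {x : ℕ}
    (hx : x < 2 * D.n - 1) : D.bd (D.bd x) ≠ x := by
  intro h
  set y := D.bd x with hy
  have hyx : y ≠ x := hS.bd_ne_self hD hn hx
  have hy_last : y ≠ 2 * D.n - 1 := fun h' => hyx (by rw [← h, h', hD.bd_last])
  have hy_lt : y < 2 * D.n - 1 := by
    have := hD.mapsTo_bd (show x < 2 * D.n by omega)
    simp only [mem_Iio] at this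
    omega
  rw [bd_of_lt hy_lt] at h
  rw [bd_of_lt hx] at hy
  have hfx1 : D.f (x + 1) ≠ x + 1 := hD.2.2.2.2.1 _ (by omega)
  have hfy1 : D.f (y + 1) ≠ y + 1 := hD.2.2.2.2.1 _ (by omega)
  rcases Nat.lt_or_gt_of_ne hyx with hlt | hlt
  · refine hS.2 y (x + 1) ⟨by omega, (hD.involutive.eq_iff.1 hy.symm).symm⟩ ⟨by omega, h⟩ ?_
    omega
  · refine hS.2 x (y + 1) ⟨by omega, (hD.involutive.eq_iff.1 h).symm⟩ ⟨by omega, hy.symm⟩ ?_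
    omega

end OneD

/-- For every `g ≥ 1`, every 1-backbone shape of genus `g` has at
most `4g` boundary components. -/
theorem boundary_components_le (g : ℕ) (hg : 1 ≤ g) (D : OneD)
    (hWF : D.WF) (hShape : D.IsShape) (hGenus : D.HasGenus g) :
    D.r ≤ 4 * g := by
  have hgenus : 2 * g + D.r = D.n + 1 := hGenus
  have hsucc : 2 * D.n - 1 + 1 = 2 * D.n := by have := hWF.1; omega
  have hlast := hWF.bd_last
  have hr : D.r = numCyclesOn D.bd (2 * D.n - 1) + 1 := by
    rw [OneD.r, ← hsucc, numCyclesOn_succ_of_apply_eq_self hlast, hsucc]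
  have hn : 2 ≤ D.n := by omega
  have hcycles : 3 * numCyclesOn D.bd (2 * D.n - 1) ≤ 2 * D.n - 1 :=
    three_mul_numCyclesOn_le hWF.injective_bd
      (mapsTo_Iio_of_apply_eq_self hWF.injective_bd (hsucc ▸ hWF.mapsTo_bd) hlast)
      (fun _ hx => hShape.bd_ne_self hWF hn hx) (fun _ hx => hShape.bd_bd_ne_self hWF hn hx)
  omega

end RNA
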